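/- Let y ∈ ℝ² and let x ∈ ℝ² with x ≠ y. Then the traction at x of the matrix field z ↦ J(z−y) equals U_2(x,y)/|x−y|². -/

import Mathlib

/-!
Off its singularity, `J(z) = z zᵀ / |z|²` is smooth with differential
`dJ_z(w) = (w zᵀ + z wᵀ) / |z|² - 2 (z·w) z zᵀ / |z|⁴`.
The traction of a field at `x` only involves its differential at `x`, so the traction of
`z ↦ J(z - y)` is a rational function of `d = x - y` and `ν` with denominator `|d|⁴`;
after clearing it, the claim is a polynomial identity in the coordinates of `d` and `ν`.
-/

open Real Filter MeasureTheory

/-- Euclidean norm on ℝ² (represented as `Fin 2 → ℝ`). -/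
noncomputable def nrm2 (z : Fin 2 → ℝ) : ℝ := Real.sqrt (z 0 ^ 2 + z 1 ^ 2)

/-- Euclidean inner product on ℝ². -/
noncomputable def dot2 (a b : Fin 2 → ℝ) : ℝ := a 0 * b 0 + a 1 * b 1

/-- identity matrix entries -/
noncomputable def idm (i j : Fin 2) : ℝ := if i = j then 1 else 0

/-- J(z) = z zᵀ / |z|² -/
noncomputable def Jmat (z : Fin 2 → ℝ) (i j : Fin 2) : ℝ := z i * z j / nrm2 z ^ 2

/-- divergence of a planar vector field -/
noncomputable def divg (v : (Fin 2 → ℝ) → (Fin 2 → ℝ)) (x : Fin 2 → ℝ) : ℝ :=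
  fderiv ℝ v x (Pi.single 0 1) 0 + fderiv ℝ v x (Pi.single 1 1) 1

/-- traction operator T on a planar vector field:
(Tv)(x) = λ (div v)(x) ν + 2μ ((ν·∇)v)(x) + μ (div(Qv))(x) Qν, where Q = [[0,1],[-1,0]]. -/
noncomputable def traction (lam mu : ℝ) (ν : Fin 2 → ℝ)
    (v : (Fin 2 → ℝ) → (Fin 2 → ℝ)) (x : Fin 2 → ℝ) : Fin 2 → ℝ :=
  (lam * divg v x) • ν + (2 * mu) • fderiv ℝ v x ν
    + (mu * divg (fun y => ![v y 1, -(v y 0)]) x) • ![ν 1, -(ν 0)]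

/-- traction of a 2×2 matrix-valued field, acting columnwise -/
noncomputable def tractionM (lam mu : ℝ) (ν : Fin 2 → ℝ)
    (G : (Fin 2 → ℝ) → Fin 2 → Fin 2 → ℝ) (x : Fin 2 → ℝ) (i j : Fin 2) : ℝ :=
  traction lam mu ν (fun y i' => G y i' j) x i

/-- U₁(x,y) = λ ν (x−y)ᵀ + μ (x−y) νᵀ + μ (ν·(x−y)) I -/
noncomputable def U1mat (lam mu : ℝ) (ν x y : Fin 2 → ℝ) (i j : Fin 2) : ℝ :=
  lam * ν i * (x j - y j) + mu * (x i - y i) * ν j + mu * dot2 ν (x - y) * idm i j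

/-- U₂(x,y) = (λ+2μ) ν (x−y)ᵀ + μ (x−y) νᵀ + μ (ν·(x−y)) (I − 4J(x−y)) -/
noncomputable def U2mat (lam mu : ℝ) (ν x y : Fin 2 → ℝ) (i j : Fin 2) : ℝ :=
  (lam + 2 * mu) * ν i * (x j - y j) + mu * (x i - y i) * ν j
    + mu * dot2 ν (x - y) * (idm i j - 4 * Jmat (x - y) i j)

/-- Laguerre polynomial L_n(x) = ∑_{k=0}^n (−1)^k (n choose k) x^k / k! -/
noncomputable def lagPoly (n : ℕ) (x : ℝ) : ℝ :=
  ∑ k ∈ Finset.range (n + 1), (-1 : ℝ) ^ k * (n.choose k : ℝ) * x ^ k / (k.factorial : ℝ)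

open ContinuousLinearMap

theorem nrm2_sq (z : Fin 2 → ℝ) : nrm2 z ^ 2 = z 0 ^ 2 + z 1 ^ 2 := by
  rw [nrm2, sq_sqrt (by positivity)]

theorem nrm2_sq_ne_zero {z : Fin 2 → ℝ} (hz : z ≠ 0) : nrm2 z ^ 2 ≠ 0 := by
  rw [nrm2_sq, sq, sq]
  intro h
  obtain ⟨h0, h1⟩ := mul_self_add_mul_self_eq_zero.1 h
  exact hz (funext fun k => by fin_cases k <;> assumption)

noncomputable def derivJmat (z : Fin 2 → ℝ) (a b : Fin 2) : (Fin 2 → ℝ) →L[ℝ] ℝ :=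
  (nrm2 z ^ 2)⁻¹ • (z b • proj a + z a • proj b)
    - (2 * z a * z b / (nrm2 z ^ 2) ^ 2) • (z 0 • proj 0 + z 1 • proj 1)

theorem derivJmat_apply (z : Fin 2 → ℝ) (a b : Fin 2) (w : Fin 2 → ℝ) :
    derivJmat z a b w
      = (z b * w a + z a * w b) / nrm2 z ^ 2 - 2 * z a * z b * dot2 z w / (nrm2 z ^ 2) ^ 2 := by
  simp only [derivJmat, sub_apply, smul_apply, add_apply, proj_apply, smul_eq_mul, dot2]
  ring

theorem hasFDerivAt_Jmat {z : Fin 2 → ℝ} (hz : z ≠ 0) (a b : Fin 2) :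
    HasFDerivAt (fun w => Jmat w a b) (derivJmat z a b) z := by
  have hJ : (fun w => Jmat w a b) = fun w => w a * w b * (w 0 * w 0 + w 1 * w 1)⁻¹ := by
    funext w; rw [Jmat, nrm2_sq, div_eq_mul_inv, sq, sq]
  have hr : z 0 * z 0 + z 1 * z 1 ≠ 0 := by
    have := nrm2_sq_ne_zero hz
    rwa [nrm2_sq, sq, sq] at this
  have hproj (k : Fin 2) := hasFDerivAt_apply (𝕜 := ℝ) k z
  have hden := ((hproj 0).fun_mul (hproj 0)).fun_add ((hproj 1).fun_mul (hproj 1))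
  rw [hJ]
  refine (((hproj a).fun_mul (hproj b)).fun_mul
    ((hasDerivAt_inv hr).comp_hasFDerivAt z hden)).congr_fderiv ?_
  ext w
  simp only [derivJmat, sub_apply, smul_apply, add_apply, proj_apply, smul_eq_mul, nrm2_sq,
    Function.comp_apply]
  ring

theorem traction_eq_of_hasFDerivAt (lam mu : ℝ) (ν : Fin 2 → ℝ) {v : (Fin 2 → ℝ) → Fin 2 → ℝ}
    {L : (Fin 2 → ℝ) →L[ℝ] Fin 2 → ℝ} {x : Fin 2 → ℝ} (hv : HasFDerivAt v L x) :
    traction lam mu ν v x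
      = (lam * (L (Pi.single 0 1) 0 + L (Pi.single 1 1) 1)) • ν + (2 * mu) • L ν
        + (mu * (L (Pi.single 0 1) 1 - L (Pi.single 1 1) 0)) • ![ν 1, -(ν 0)] := by
  have hrot : HasFDerivAt (fun y => ![v y 1, -(v y 0)])
      (pi (![proj 1 ∘L L, -(proj 0 ∘L L)] : Fin 2 → (Fin 2 → ℝ) →L[ℝ] ℝ)) x := by
    refine hasFDerivAt_pi.2 fun k => ?_
    fin_cases k
    · exact (hasFDerivAt_apply 1 _).comp x hv
    · exact ((hasFDerivAt_apply 0 _).comp x hv).neg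
  simp only [traction, divg, hv.fderiv, hrot.fderiv]
  simp [sub_eq_add_neg]

/-- The traction of the matrix field z ↦ J(z−y) equals U₂(x,y)/|x−y|². -/
theorem traction_J_field (lam mu : ℝ) (ν : Fin 2 → ℝ) (y x : Fin 2 → ℝ) (hxy : x ≠ y) :
    ∀ i j : Fin 2,
      tractionM lam mu ν (fun z => Jmat (z - y)) x i j
        = U2mat lam mu ν x y i j / nrm2 (x - y) ^ 2 := by
  intro i j
  have hd : x - y ≠ 0 := sub_ne_zero.2 hxy
  have hcol : HasFDerivAt (fun z i' => Jmat (z - y) i' j)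
      (pi fun i' => derivJmat (x - y) i' j) x :=
    hasFDerivAt_pi.2 fun i' => (hasFDerivAt_comp_sub y).2 (hasFDerivAt_Jmat hd i' j)
  have hr := nrm2_sq_ne_zero hd
  rw [tractionM, traction_eq_of_hasFDerivAt lam mu ν hcol]
  simp only [U2mat, ← Pi.sub_apply]
  generalize x - y = d at hr ⊢
  rw [nrm2_sq] at hr
  simp only [Pi.add_apply, Pi.smul_apply, smul_eq_mul, pi_apply, derivJmat_apply, Jmat, dot2,
    idm, nrm2_sq]
  fin_cases i <;> fin_cases j <;>
    simp only [Fin.zero_eta, Fin.mk_one, Fin.isValue, Pi.single_apply, Matrix.cons_val_zero,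
      Matrix.cons_val_one, Matrix.cons_val_fin_one, ↓reduceIte, one_ne_zero, zero_ne_one] <;>
    field_simp <;> ring
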